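/- For a tree-like multiset t over F and any non-root element f of the support of flat_F(t), there is a unique element p in the support of flat_F(t) such that the tree-like multiset induced by f (the unique ingredient with root f) is either directly in the domain of the multiset induced by p, or is in the domain of a group ingredient that is in the domain of the multiset induced by p. Hence the parent function is well-defined. -/

import Mathlib

namespace CFDPaper

noncomputable section

attribute [local instance] Classical.decEq
attribute [local instance] Classical.propDecidable

/-- Depth-indexed hereditary finite multisets: `HMd A n` models the class `M_{n+1}(A)`
of the cumulative hierarchy of finite multisets over the urelements `A`. -/
@[reducible] def HMd (A : Type) : ℕ → Type
  | 0 => Multiset A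
  | n + 1 => Multiset (A ⊕ HMd A n)

variable {A B F : Type}

instance instAddHMd (A : Type) (n : ℕ) : Add (HMd A n) :=
  match n with
  | 0 => inferInstanceAs (Add (Multiset A))
  | n + 1 => inferInstanceAs (Add (Multiset (A ⊕ HMd A n)))

/-- The canonical inclusion `M_{n+1}(A) ⊆ M_{n+2}(A)`. -/
def HMd.up : ∀ n : ℕ, HMd A n → HMd A (n + 1)
  | 0, m => ((m : Multiset A).map (Sum.inl : A → A ⊕ HMd A 0) : Multiset (A ⊕ HMd A 0))
  | n + 1, m => ((m : Multiset (A ⊕ HMd A n)).map (Sum.map id (HMd.up n)) :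
      Multiset (A ⊕ HMd A (n + 1)))

/-- Iterated inclusion along `k ≤ n`. -/
def HMd.liftLe {k n : ℕ} (h : k ≤ n) (m : HMd A k) : HMd A n :=
  Nat.leRecOn h (fun {i} x => HMd.up i x) m

/-- `m` (living at some level of the hierarchy) already appears at level `r`. -/
def comesFrom (r : ℕ) (m : Σ n, HMd A n) : Prop :=
  ∃ (h : r ≤ m.1) (x : HMd A r), HMd.liftLe h x = m.2

/-- The rank of a hereditary multiset: least level of the hierarchy where it occurs
(`rank m = r` corresponds to paper-rank `r + 1`). -/
def rank (m : Σ n, HMd A n) : ℕ := sInf {r | comesFrom r m}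

/-- Equality of hereditary multisets living at different levels, via lifting. -/
def hmEq {k n : ℕ} (x : HMd A k) (y : HMd A n) : Prop :=
  HMd.liftLe (le_max_left k n) x = HMd.liftLe (le_max_right k n) y

/-- Membership of a multiset in the domain (support) of a higher-level multiset. -/
def HMd.Memb {n : ℕ} (x : HMd A n) (m : HMd A (n + 1)) : Prop :=
  Sum.inr x ∈ (m : Multiset (A ⊕ HMd A n))

/-- The flattening function: flat multiplicity of each urelement. -/
def HMd.flat : ∀ {n : ℕ}, HMd A n → Multiset A
  | 0, m => (m : Multiset A)
  | n + 1, m => (m : Multiset (A ⊕ HMd A n)).bind fun e =>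
      match e with
      | Sum.inl a => {a}
      | Sum.inr x => HMd.flat (n := n) x

/-- Top-level multiplicity of an urelement. -/
def HMd.acount : ∀ {n : ℕ}, F → HMd F n → ℕ
  | 0, f, m => (m : Multiset F).count f
  | _ + 1, f, m => (m : Multiset _).count (Sum.inl f)

/-- The multiset-ingredient relation (transitive closure of domain membership). -/
inductive Ingr (A : Type) : ∀ {k n : ℕ}, HMd A k → HMd A n → Prop
  | mem {n : ℕ} {x : HMd A n} {m : HMd A (n + 1)} : x.Memb m → Ingr A x m
  | tail {k n : ℕ} {x : HMd A k} {y : HMd A n} {m : HMd A (n + 1)} :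
      Ingr A x y → y.Memb m → Ingr A x m

/-- Disjointness of flattened domains. -/
def FDisj {k n : ℕ} (x : HMd A k) (y : HMd A n) : Prop :=
  ∀ a, a ∈ x.flat → a ∉ y.flat

/-- The singleton multiset `⌈f⌉` at each level. -/
def HMd.single : ∀ n : ℕ, A → HMd A n
  | 0, f => ({f} : Multiset A)
  | _ + 1, f => ({Sum.inl f} : Multiset _)

/-- `⌈xᶜ⌉` : the multiset containing `x` with multiplicity `c`. -/
def HMd.rep {n : ℕ} (c : ℕ) (x : HMd A n) : HMd A (n + 1) :=
  (Multiset.replicate c (Sum.inr x) : Multiset (A ⊕ HMd A n))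

/-- `⌈t₁^{n₁}, …, t_k^{n_k}⌉` built from a list of tree-multiplicity pairs. -/
def HMd.ofList {n : ℕ} (l : List (HMd A n × ℕ)) : HMd A (n + 1) :=
  ((l.map fun p => Multiset.replicate p.2 (Sum.inr p.1 : A ⊕ HMd A n)).sum :
    Multiset (A ⊕ HMd A n))

/-- A "group" multiset: one whose domain contains no urelements. -/
def HMd.NoAtoms {n : ℕ} (g : HMd A (n + 1)) : Prop :=
  ∀ a : A, Sum.inl a ∉ (g : Multiset (A ⊕ HMd A n))

/-- Tree-like multisets over `F` (Definition: singleton, solitary-extension,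
group-extension; closed under the cumulative inclusions). -/
inductive TreeLike (F : Type) : ∀ n : ℕ, HMd F n → Prop
  | sing (n : ℕ) (f : F) : TreeLike F n (HMd.single n f)
  | up {n : ℕ} {t : HMd F n} : TreeLike F n t → TreeLike F (n + 1) (HMd.up n t)
  | sol {n : ℕ} {t₁ : HMd F (n + 1)} {t₂ : HMd F n} (c : ℕ) :
      TreeLike F (n + 1) t₁ → TreeLike F n t₂ → FDisj t₁ t₂ →
      TreeLike F (n + 1) (t₁ + HMd.rep c t₂)
  | grp {n : ℕ} {t : HMd F (n + 1)} (l : List (HMd F n × ℕ)) :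
      TreeLike F (n + 1) t →
      (∀ p ∈ l, TreeLike F n p.1) →
      (∀ p ∈ l, FDisj t p.1) →
      l.Pairwise (fun p q => FDisj p.1 q.1) →
      TreeLike F (n + 2) (HMd.up (n + 1) t + HMd.rep 1 (HMd.ofList l))

/-- `x` is an ingredient of `t`, or `t` itself. -/
def IngrE {k n : ℕ} (x : HMd A k) (t : HMd A n) : Prop :=
  Ingr A x t ∨ hmEq x t

/-- `x` occurs (up to lifting) in the domain of `m`. -/
def MemUpTo {k n : ℕ} (x : HMd A k) (m : HMd A (n + 1)) : Prop :=
  ∃ y : HMd A n, HMd.Memb y m ∧ hmEq x y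

/-- `x` is the tree-like ingredient of `t` induced by (i.e. with root) `f`. -/
def RootedIngr {n : ℕ} (t : HMd F n) (f : F) {k : ℕ} (x : HMd F k) : Prop :=
  IngrE x t ∧ TreeLike F k x ∧ 0 < HMd.acount f x

/-- `p` is the parent of `f` in the tree-like multiset `t`: the induced multiset of `f`
lies in the domain of the multiset induced by `p`, directly or inside a group ingredient. -/
def IsParentIn {n : ℕ} (t : HMd F n) (f p : F) : Prop :=
  ∃ (kp : ℕ) (xp : HMd F (kp + 1)), RootedIngr t p xp ∧
    ∃ (kf : ℕ) (xf : HMd F kf), RootedIngr t f xf ∧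
      (MemUpTo xf xp ∨
        ∃ (kg : ℕ) (g : HMd F (kg + 1)), MemUpTo g xp ∧ HMd.NoAtoms g ∧ MemUpTo xf g)

/-- `f` occurs grouped in `t`: some group ingredient of `t` has a member with root `f`. -/
def InGroupOf {n : ℕ} (t : HMd F n) (f : F) : Prop :=
  ∃ (kg : ℕ) (g : HMd F (kg + 1)), Ingr F g t ∧ HMd.NoAtoms g ∧
    ∃ x : HMd F kg, HMd.Memb x g ∧ TreeLike F kg x ∧ 0 < HMd.acount f x

/-- Relaxation: set every multiplicity, at every nesting level, to 1. -/
def HMd.relax : ∀ {n : ℕ}, HMd A n → HMd A n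
  | 0, m => ((m : Multiset A).dedup : Multiset A)
  | n + 1, m =>
      (((m : Multiset (A ⊕ HMd A n)).map (Sum.map id (HMd.relax (n := n)))).dedup :
        Multiset (A ⊕ HMd A n))

/-- Renaming of urelements. -/
def HMd.mapA (g : A → B) : ∀ {n : ℕ}, HMd A n → HMd B n
  | 0, m => ((m : Multiset A).map g : Multiset B)
  | n + 1, m => ((m : Multiset (A ⊕ HMd A n)).map (Sum.map g (HMd.mapA g (n := n))) :
      Multiset (B ⊕ HMd B n))

/-- Cardinality-based feature diagrams over the feature universe `F`. -/
structure CFD (F : Type) where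
  feat : Finset F
  root : F
  root_mem : root ∈ feat
  parent : F → F
  parent_mem : ∀ f ∈ feat, f ≠ root → parent f ∈ feat
  reaches : ∀ f ∈ feat,
    Relation.ReflTransGen (fun a b => a ∈ feat ∧ a ≠ root ∧ parent a = b) f root
  groups : Finset (Finset F)
  groups_sub : ∀ G ∈ groups, ∀ f ∈ G, f ∈ feat ∧ f ≠ root
  groups_card : ∀ G ∈ groups, 1 < G.card
  groups_sib : ∀ G ∈ groups, ∀ f ∈ G, ∀ g ∈ G, parent f = parent g
  groups_disj : ∀ G ∈ groups, ∀ G' ∈ groups, G = G' ∨ Disjoint G G'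
  card : F → Set ℕ
  gcard : Finset F → Set ℕ
  card_ok : ∀ f ∈ feat, f ≠ root → (card f).Nonempty ∧ card f ≠ {0}
  gcard_ok : ∀ G ∈ groups,
    (gcard G).Finite ∧ (gcard G).Nonempty ∧ gcard G ≠ {0} ∧ ∀ c ∈ gcard G, c ≤ G.card
  parent_junk : ∀ f, ¬(f ∈ feat ∧ f ≠ root) → parent f = root
  card_junk : ∀ f, ¬(f ∈ feat ∧ f ≠ root) → card f = ∅
  gcard_junk : ∀ G, G ∉ groups → gcard G = ∅

variable {F : Type}

/-- The solitary (non-grouped) children of `f` in `D`. -/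
def solChildren (D : CFD F) (f : F) : Finset F :=
  D.feat.filter fun s => s ≠ D.root ∧ D.parent s = f ∧ ∀ G ∈ D.groups, s ∉ G

/-- The groups whose members are children of `f` in `D`. -/
def childGroups (D : CFD F) (f : F) : Finset (Finset F) :=
  D.groups.filter fun G => ∃ s ∈ G, D.parent s = f

/-- The hereditary multiset assembled from a choice of sub-products. -/
def prodMS (D : CFD F) (f : F) {n : ℕ} (hs : F → HMd F n) (hc : F → ℕ)
    (hg : Finset F → HMd F n) : HMd F (n + 1) :=
  ((({Sum.inl f} : Multiset (F ⊕ HMd F n))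
    + ((solChildren D f).val.map fun s =>
        Multiset.replicate (hc s) (Sum.inr (hs s) : F ⊕ HMd F n)).sum
    + ((childGroups D f).val.map fun G => (Sum.inr (hg G) : F ⊕ HMd F n)))
    : Multiset (F ⊕ HMd F n))

/-- The hereditary multiset assembled from a group selection. -/
def grpMS {n : ℕ} (sel : Finset F) (hs : F → HMd F n) (hc : F → ℕ) : HMd F (n + 1) :=
  ((sel.val.map fun s =>
      Multiset.replicate (hc s) (Sum.inr (hs s) : F ⊕ HMd F n)).sum :
    Multiset (F ⊕ HMd F n))

mutual
  /-- `HierProd D f m` : `m` is a hierarchical product of the subdiagram of `D` induced by `f`. -/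
  inductive HierProd {F : Type} (D : CFD F) : F → ∀ {n : ℕ}, HMd F n → Prop
    | mk {n : ℕ} (f : F) (hs : F → HMd F n) (hc : F → ℕ) (hg : Finset F → HMd F n)
        (hf : f ∈ D.feat)
        (hsol : ∀ s ∈ solChildren D f, HierProd D s (hs s))
        (hsolc : ∀ s ∈ solChildren D f, hc s ∈ D.card s)
        (hgrp : ∀ G ∈ childGroups D f, GroupProd D G (hg G)) :
        HierProd D f (prodMS D f hs hc hg)
  /-- `GroupProd D G m` : `m` is a hierarchical product associated with the group `G` of `D`. -/
  inductive GroupProd {F : Type} (D : CFD F) : Finset F → ∀ {n : ℕ}, HMd F n → Prop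
    | mk {n : ℕ} (G sel : Finset F) (hs : F → HMd F n) (hc : F → ℕ)
        (hsub : sel ⊆ G) (hG : G ∈ D.groups) (hcard : sel.card ∈ D.gcard G)
        (hmem : ∀ s ∈ sel, HierProd D s (hs s))
        (hmemc : ∀ s ∈ sel, hc s ∈ D.card s) :
        GroupProd D G (grpMS sel hs hc)
end

/-- The hierarchical theory of `D` (as a set of hereditary multisets at all levels). -/
def ProductsSet (D : CFD F) : Set (Σ n, HMd F n) := {m | HierProd D D.root m.2}

/-- A set of (tree-like) multisets is mergeable if a single CFD represents all of them. -/
def Mergeable (U : Set (Σ n, HMd F n)) : Prop :=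
  ∃ D : CFD F, ∀ m ∈ U, HierProd D D.root m.2

/-- A set is completely mergeable if it is exactly the hierarchical theory of some CFD. -/
def CompletelyMergeable (U : Set (Σ n, HMd F n)) : Prop :=
  ∃ D : CFD F, U = ProductsSet D

/-- Pointwise relaxation of a set of hereditary multisets. -/
def relaxSet (U : Set (Σ n, HMd F n)) : Set (Σ n, HMd F n) :=
  {x | ∃ m ∈ U, x = ⟨m.1, HMd.relax m.2⟩}

/-- The flat products of `D` (Definition of flat theory). -/
def FlatProd (D : CFD F) (m : Multiset F) : Prop :=
  (∀ f ∈ m, f ∈ D.feat) ∧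
  m.count D.root = 1 ∧
  (∀ f ∈ D.feat, f ≠ D.root → 0 < m.count f →
    ∃ c ∈ D.card f, m.count f = c * m.count (D.parent f)) ∧
  (∀ f ∈ D.feat, f ≠ D.root → (∀ G ∈ D.groups, f ∉ G) → 0 ∉ D.card f →
    0 < m.count (D.parent f) → 0 < m.count f) ∧
  (∀ G ∈ D.groups, ∀ g ∈ G, 0 < m.count (D.parent g) →
    (G.filter fun f => 0 < m.count f).card ∈ D.gcard G)

/-- Rooted (possibly countably infinite) trees with explicit parent function. -/
structure RTree (N : Type) where
  nodes : Set N
  countable : nodes.Countable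
  root : N
  root_mem : root ∈ nodes
  parent : N → N
  parent_mem : ∀ f ∈ nodes, f ≠ root → parent f ∈ nodes
  reaches : ∀ f ∈ nodes,
    Relation.ReflTransGen (fun a b => a ∈ nodes ∧ a ≠ root ∧ parent a = b) f root


/-!
In a tree-like multiset the flattenings of the ingredients form a laminar family, and every
ingredient is *separated*: its members have pairwise disjoint flattenings, which also avoid its
top-level urelements. Both properties pass through the three constructions precisely because of
their disjointness side conditions. Together with the fact that no multiset is an ingredient of
itself (a size that is invariant under lifting drops along membership), they show that an
ingredient is determined by any of its top-level urelements, and that a nonempty multiset lies in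
the domain of at most one ingredient. Hence the multiset induced by `f`, and then the one induced
by its parent, are unique, and so is the parent, the root of the latter. Existence is by
induction on the construction: a freshly attached tree (or group of trees) has the root of the
base as the parent of its root(s), and every other feature keeps its parent.
-/

namespace HMd

theorem memb_add {n : ℕ} {a b : HMd A (n + 1)} {y : HMd A n} :
    Memb y (a + b) ↔ Memb y a ∨ Memb y b :=
  Multiset.mem_add

theorem memb_rep {n c : ℕ} {x y : HMd A n} : Memb y (rep c x) ↔ 0 < c ∧ y = x := by
  simp [Memb, rep, Multiset.mem_replicate, Nat.pos_iff_ne_zero]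

theorem mem_ofList {n : ℕ} {l : List (HMd A n × ℕ)} {e : A ⊕ HMd A n} :
    e ∈ (ofList l : Multiset (A ⊕ HMd A n)) ↔ ∃ p ∈ l, 0 < p.2 ∧ e = Sum.inr p.1 := by
  unfold ofList
  induction l with
  | nil => simp
  | cons q l ih => simp [ih, Multiset.mem_replicate, Nat.pos_iff_ne_zero, eq_comm]

theorem memb_ofList {n : ℕ} {l : List (HMd A n × ℕ)} {y : HMd A n} :
    Memb y (ofList l) ↔ ∃ p ∈ l, 0 < p.2 ∧ y = p.1 := by
  refine mem_ofList.trans ?_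
  simp only [Sum.inr.injEq]

theorem noAtoms_ofList {n : ℕ} (l : List (HMd A n × ℕ)) : NoAtoms (ofList l) := by
  intro a h
  obtain ⟨p, -, -, h⟩ := mem_ofList.mp h
  cases h

theorem memb_up_succ {n : ℕ} {m y : HMd A (n + 1)} :
    Memb y (up (n + 1) m) ↔ ∃ z, Memb z m ∧ y = up n z := by
  simp [Memb, up, eq_comm]

theorem not_memb_up_zero {m y : HMd A 0} : ¬ Memb y (up 0 m) := by
  simp [Memb, up]

theorem flat_succ {n : ℕ} (m : HMd A (n + 1)) :
    m.flat = (m : Multiset (A ⊕ HMd A n)).bind (Sum.elim ({·}) flat) := by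
  simp only [flat]
  congr 1
  ext e
  cases e <;> rfl

theorem flat_add {n : ℕ} (a b : HMd A (n + 1)) : (a + b).flat = a.flat + b.flat := by
  simp only [flat_succ]
  exact Multiset.add_bind _ _ _

theorem flat_rep {n c : ℕ} (x : HMd A n) : (rep c x).flat = c • x.flat := by
  induction c with
  | zero => simp [flat_succ, rep]
  | succ c ih => simp_all [flat_succ, rep, Multiset.replicate_succ, succ_nsmul']

theorem mem_flat_add_rep {n c : ℕ} {s : HMd A (n + 1)} {u : HMd A n} {a : A} :
    a ∈ (s + rep c u).flat ↔ a ∈ s.flat ∨ (0 < c ∧ a ∈ u.flat) := by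
  rw [flat_add, flat_rep, Multiset.mem_add, Multiset.mem_nsmul, Nat.pos_iff_ne_zero]

theorem mem_flat_ofList {n : ℕ} {l : List (HMd A n × ℕ)} {a : A} :
    a ∈ (ofList l).flat ↔ ∃ p ∈ l, 0 < p.2 ∧ a ∈ p.1.flat := by
  rw [flat_succ, Multiset.mem_bind]
  constructor
  · rintro ⟨e, he, ha⟩
    obtain ⟨p, hp, hc, rfl⟩ := mem_ofList.mp he
    exact ⟨p, hp, hc, ha⟩
  · rintro ⟨p, hp, hc, ha⟩
    exact ⟨Sum.inr p.1, mem_ofList.mpr ⟨p, hp, hc, rfl⟩, ha⟩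

theorem flat_single (n : ℕ) (f : A) : (single n f).flat = {f} := by
  cases n
  · rfl
  · simp [single, flat_succ]

theorem flat_up {n : ℕ} (t : HMd A n) : (up n t).flat = t.flat := by
  induction n with
  | zero => simpa [up, flat, Multiset.bind_map] using Multiset.bind_singleton id (s := t)
  | succ n ih =>
    simp only [up, flat_succ, Multiset.bind_map]
    refine Multiset.bind_congr fun e _ => ?_
    cases e <;> simp [ih]

theorem mem_flat_of_memb {n : ℕ} {y : HMd A n} {m : HMd A (n + 1)} (h : Memb y m) {a : A}
    (ha : a ∈ y.flat) : a ∈ m.flat := by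
  rw [flat_succ, Multiset.mem_bind]
  exact ⟨Sum.inr y, h, ha⟩

theorem acount_succ {n : ℕ} (a : A) (m : HMd A (n + 1)) :
    acount a m = (m : Multiset (A ⊕ HMd A n)).count (Sum.inl a) := rfl

theorem acount_add {n : ℕ} (a : A) (x y : HMd A (n + 1)) :
    acount a (x + y) = acount a x + acount a y :=
  Multiset.count_add _ _ _

theorem acount_rep {n c : ℕ} (a : A) (x : HMd A n) : acount a (rep c x) = 0 := by
  simp [acount_succ, rep, Multiset.count_replicate]

theorem acount_add_rep {n c : ℕ} (a : A) (s : HMd A (n + 1)) (u : HMd A n) :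
    acount a (s + rep c u) = acount a s := by
  rw [acount_add, acount_rep, add_zero]

theorem acount_eq_zero_of_noAtoms {n : ℕ} {g : HMd A (n + 1)} (h : NoAtoms g) (a : A) :
    acount a g = 0 :=
  Multiset.count_eq_zero.mpr (h a)

theorem acount_single (n : ℕ) (f a : A) : 0 < acount a (single n f) ↔ a = f := by
  by_cases h : a = f <;> cases n <;> simp [acount, single, h]

theorem up_injective (n : ℕ) : Function.Injective (up (A := A) n) := by
  induction n with
  | zero => exact Multiset.map_injective Sum.inl_injective
  | succ n ih => exact Multiset.map_injective (Sum.map_injective.mpr ⟨fun _ _ h => h, ih⟩)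

theorem acount_up {n : ℕ} (t : HMd A n) (a : A) : acount a (up n t) = acount a t := by
  cases n with
  | zero =>
    exact @Multiset.count_map_eq_count' _ _ (_) (_) Sum.inl (t : Multiset A) Sum.inl_injective a
  | succ n =>
    exact @Multiset.count_map_eq_count' _ _ (_) (_) (Sum.map id (up n))
      (t : Multiset (A ⊕ HMd A n)) (Sum.map_injective.mpr ⟨fun _ _ h => h, up_injective n⟩)
      (Sum.inl a)

theorem mem_flat_of_acount_pos {n : ℕ} {t : HMd A n} {a : A} (h : 0 < acount a t) :
    a ∈ t.flat := by
  cases n with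
  | zero => exact Multiset.count_pos.mp h
  | succ n =>
    rw [flat_succ, Multiset.mem_bind]
    exact ⟨Sum.inl a, Multiset.count_pos.mp h, by simp⟩

theorem up_single (n : ℕ) (f : A) : up n (single n f) = single (n + 1) f := by
  cases n <;> simp [up, single]

def size : ∀ {n : ℕ}, HMd A n → ℕ
  | 0, m => Multiset.card (m : Multiset A)
  | n + 1, m =>
    ((m : Multiset (A ⊕ HMd A n)).map (Sum.elim (fun _ => 1) fun x => size x + 1)).sum

theorem size_up {n : ℕ} (t : HMd A n) : (up n t).size = t.size := by
  induction n with
  | zero => simp [size, up, Function.comp_def]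
  | succ n ih =>
    show ((Multiset.map (Sum.map id (up n)) t).map _).sum = (Multiset.map _ t).sum
    rw [Multiset.map_map]
    congr 1
    refine Multiset.map_congr rfl fun e _ => ?_
    cases e with
    | inl => rfl
    | inr x => exact congrArg (· + 1) (ih x)

theorem size_lt_of_memb {n : ℕ} {y : HMd A n} {m : HMd A (n + 1)} (h : Memb y m) :
    y.size < m.size :=
  Multiset.le_sum_of_mem (Multiset.mem_map_of_mem (Sum.elim (fun _ => 1) fun x => size x + 1) h)

theorem liftLe_self {k : ℕ} (h : k ≤ k) (x : HMd A k) : liftLe h x = x :=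
  Nat.leRecOn_self x

theorem liftLe_succ {k m : ℕ} (h : k ≤ m) (h' : k ≤ m + 1) (x : HMd A k) :
    liftLe h' x = up m (liftLe h x) :=
  Nat.leRecOn_succ h x

theorem liftLe_trans {k m j : ℕ} (h₁ : k ≤ m) (h₂ : m ≤ j) (h₃ : k ≤ j) (x : HMd A k) :
    liftLe h₃ x = liftLe h₂ (liftLe h₁ x) :=
  Nat.leRecOn_trans h₁ h₂ x

theorem liftLe_injective {k m : ℕ} (h : k ≤ m) : Function.Injective (liftLe (A := A) h) :=
  Nat.leRecOn_injective h _ up_injective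

theorem apply_liftLe {β : Sort*} (φ : ∀ {n : ℕ}, HMd A n → β)
    (hφ : ∀ n (x : HMd A n), φ (up n x) = φ x) {k m : ℕ} (h : k ≤ m) (x : HMd A k) :
    φ (liftLe h x) = φ x := by
  induction m, h using Nat.le_induction with
  | base => rw [liftLe_self]
  | succ m hkm ih => rw [liftLe_succ hkm, hφ, ih]

theorem liftLe_single {k m : ℕ} (h : k ≤ m) (f : A) : liftLe h (single k f) = single m f := by
  induction m, h using Nat.le_induction with
  | base => rw [liftLe_self]
  | succ m hkm ih => rw [liftLe_succ hkm, ih, up_single]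

end HMd

open HMd

theorem hmEq_iff_liftLe {k k' M : ℕ} {x : HMd A k} {y : HMd A k'} (hx : k ≤ M) (hy : k' ≤ M) :
    hmEq x y ↔ liftLe hx x = liftLe hy y := by
  have hM : max k k' ≤ M := max_le hx hy
  rw [liftLe_trans (le_max_left k k') hM hx, liftLe_trans (le_max_right k k') hM hy]
  exact (liftLe_injective hM).eq_iff.symm

theorem hmEq_of_liftLe_eq {k k' : ℕ} {x : HMd A k} {y : HMd A k'} (h : k ≤ k')
    (he : liftLe h x = y) : hmEq x y :=
  (hmEq_iff_liftLe h le_rfl).mpr (by rw [he, liftLe_self])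

theorem hmEq.liftLe_eq {k k' : ℕ} {x : HMd A k} {y : HMd A k'} (h : hmEq x y) (hle : k ≤ k') :
    liftLe hle x = y := by
  rw [(hmEq_iff_liftLe hle le_rfl).mp h, liftLe_self]

theorem hmEq.refl {k : ℕ} (x : HMd A k) : hmEq x x := rfl

theorem hmEq.symm {k k' : ℕ} {x : HMd A k} {y : HMd A k'} (h : hmEq x y) : hmEq y x :=
  ((hmEq_iff_liftLe (le_max_right k k') (le_max_left k k')).mpr
    ((hmEq_iff_liftLe (le_max_left k k') (le_max_right k k')).mp h).symm)

theorem hmEq.trans {k₁ k₂ k₃ : ℕ} {x : HMd A k₁} {y : HMd A k₂} {z : HMd A k₃}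
    (h₁ : hmEq x y) (h₂ : hmEq y z) : hmEq x z := by
  have hx : k₁ ≤ max k₁ (max k₂ k₃) := le_max_left _ _
  have hy : k₂ ≤ max k₁ (max k₂ k₃) := (le_max_left _ _).trans (le_max_right _ _)
  have hz : k₃ ≤ max k₁ (max k₂ k₃) := (le_max_right _ _).trans (le_max_right _ _)
  exact (hmEq_iff_liftLe hx hz).mpr
    (((hmEq_iff_liftLe hx hy).mp h₁).trans ((hmEq_iff_liftLe hy hz).mp h₂))

theorem hmEq_up {k : ℕ} (x : HMd A k) : hmEq (up k x) x :=
  (hmEq_of_liftLe_eq (Nat.le_succ k) (by rw [liftLe_succ le_rfl, liftLe_self])).symm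

theorem hmEq.apply_eq {β : Sort*} (φ : ∀ {n : ℕ}, HMd A n → β)
    (hφ : ∀ n (x : HMd A n), φ (up n x) = φ x) {k k' : ℕ} {x : HMd A k} {y : HMd A k'}
    (h : hmEq x y) : φ x = φ y := by
  rw [← apply_liftLe φ hφ (le_max_left k k') x, ← apply_liftLe φ hφ (le_max_right k k') y]
  exact congrArg φ h

theorem hmEq.acount_eq {k k' : ℕ} {x : HMd A k} {y : HMd A k'} (h : hmEq x y) (a : A) :
    acount a x = acount a y :=
  h.apply_eq (acount a) fun _ x => acount_up x a

theorem hmEq.flat_eq {k k' : ℕ} {x : HMd A k} {y : HMd A k'} (h : hmEq x y) :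
    x.flat = y.flat :=
  h.apply_eq flat fun _ => flat_up

theorem hmEq_single (n : ℕ) (f : A) : hmEq (single n f) (single 0 f) :=
  (hmEq_of_liftLe_eq (Nat.zero_le n) (liftLe_single _ f)).symm

theorem memUpTo_of_memb {n : ℕ} {y : HMd A n} {m : HMd A (n + 1)} (h : Memb y m) :
    MemUpTo y m :=
  ⟨y, h, hmEq.refl y⟩

theorem memUpTo_congr_left {k k' n : ℕ} {x : HMd A k} {x' : HMd A k'} (h : hmEq x x')
    {m : HMd A (n + 1)} : MemUpTo x m ↔ MemUpTo x' m :=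
  ⟨fun ⟨y, hy, he⟩ => ⟨y, hy, h.symm.trans he⟩, fun ⟨y, hy, he⟩ => ⟨y, hy, h.trans he⟩⟩

theorem memUpTo_up {k n : ℕ} {x : HMd A k} {m : HMd A (n + 1)} :
    MemUpTo x (up (n + 1) m) ↔ MemUpTo x m := by
  constructor
  · rintro ⟨y, hy, he⟩
    obtain ⟨z, hz, rfl⟩ := memb_up_succ.mp hy
    exact ⟨z, hz, he.trans (hmEq_up z)⟩
  · rintro ⟨z, hz, he⟩
    exact ⟨up n z, memb_up_succ.mpr ⟨z, hz, rfl⟩, he.trans (hmEq_up z).symm⟩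

theorem memUpTo_liftLe {k j c : ℕ} (h : j ≤ c) (m : HMd A (j + 1)) {x : HMd A k} :
    MemUpTo x (liftLe (Nat.succ_le_succ h) m) ↔ MemUpTo x m := by
  induction c, h using Nat.le_induction with
  | base => rw [liftLe_self]
  | succ c hjc ih => rw [liftLe_succ (Nat.succ_le_succ hjc), memUpTo_up, ih]

theorem memUpTo_congr_right {k j c : ℕ} {x : HMd A k} {m : HMd A (j + 1)} {w : HMd A (c + 1)}
    (h : hmEq m w) : MemUpTo x m ↔ MemUpTo x w := by
  rcases le_total j c with hle | hle
  · rw [← h.liftLe_eq (Nat.succ_le_succ hle), memUpTo_liftLe hle]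
  · rw [← h.symm.liftLe_eq (Nat.succ_le_succ hle), memUpTo_liftLe hle]

theorem not_memUpTo_of_hmEq_zero {k j : ℕ} {x : HMd A k} {m : HMd A (j + 1)} {w : HMd A 0}
    (h : hmEq m w) : ¬ MemUpTo x m := by
  rw [memUpTo_congr_right (h.trans (hmEq_up w).symm)]
  rintro ⟨y, hy, -⟩
  exact not_memb_up_zero hy

theorem MemUpTo.mem_flat {k n : ℕ} {x : HMd A k} {m : HMd A (n + 1)} (h : MemUpTo x m)
    {a : A} (ha : a ∈ x.flat) : a ∈ m.flat := by
  obtain ⟨y, hy, he⟩ := h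
  exact mem_flat_of_memb hy (he.flat_eq ▸ ha)

theorem memUpTo_add_rep {k n c : ℕ} {s : HMd A (n + 1)} {u : HMd A n} {x : HMd A k} :
    MemUpTo x (s + rep c u) ↔ MemUpTo x s ∨ (0 < c ∧ hmEq x u) := by
  constructor
  · rintro ⟨y, hy, he⟩
    rcases memb_add.mp hy with hy | hy
    · exact .inl ⟨y, hy, he⟩
    · obtain ⟨hc, rfl⟩ := memb_rep.mp hy
      exact .inr ⟨hc, he⟩
  · rintro (⟨y, hy, he⟩ | ⟨hc, he⟩)
    · exact ⟨y, memb_add.mpr (.inl hy), he⟩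
    · exact ⟨u, memb_add.mpr (.inr (memb_rep.mpr ⟨hc, rfl⟩)), he⟩

theorem memUpTo_ofList {k n : ℕ} {l : List (HMd A n × ℕ)} {x : HMd A k} :
    MemUpTo x (ofList l) ↔ ∃ p ∈ l, 0 < p.2 ∧ hmEq x p.1 := by
  constructor
  · rintro ⟨y, hy, he⟩
    obtain ⟨p, hp, hc, rfl⟩ := memb_ofList.mp hy
    exact ⟨p, hp, hc, he⟩
  · rintro ⟨p, hp, hc, he⟩
    exact ⟨p.1, memb_ofList.mpr ⟨p, hp, hc, rfl⟩, he⟩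

theorem not_ingr_zero {k : ℕ} {x : HMd A k} {m : HMd A 0} : ¬ Ingr A x m := nofun

theorem Ingr.trans {k j n : ℕ} {x : HMd A k} {y : HMd A j} {m : HMd A n}
    (h₁ : Ingr A x y) (h₂ : Ingr A y m) : Ingr A x m := by
  induction h₂ with
  | mem h => exact .tail h₁ h
  | tail _ hm ih => exact .tail (ih h₁) hm

theorem Ingr.mono {k n : ℕ} {x : HMd A k} {m m' : HMd A (n + 1)} (h : Ingr A x m)
    (hm : ∀ y, Memb y m → Memb y m') : Ingr A x m' := by
  cases h with
  | mem h => exact .mem (hm _ h)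
  | tail hx hy => exact .tail hx (hm _ hy)

theorem Ingr.up {k n : ℕ} {x : HMd A k} {m : HMd A n} (h : Ingr A x m) :
    Ingr A (HMd.up k x) (HMd.up n m) := by
  induction h with
  | mem h => exact .mem (memb_up_succ.mpr ⟨_, h, rfl⟩)
  | tail _ hm ih => exact .tail ih (memb_up_succ.mpr ⟨_, hm, rfl⟩)

theorem Ingr.mem_flat {k n : ℕ} {x : HMd A k} {m : HMd A n} (h : Ingr A x m) {a : A}
    (ha : a ∈ x.flat) : a ∈ m.flat := by
  induction h with
  | mem h => exact mem_flat_of_memb h ha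
  | tail _ hm ih => exact mem_flat_of_memb hm (ih ha)

def IngrUpTo {k n : ℕ} (x : HMd A k) (t : HMd A n) : Prop :=
  ∃ (j : ℕ) (y : HMd A j), hmEq x y ∧ Ingr A y t

def IngrEUpTo {k n : ℕ} (x : HMd A k) (t : HMd A n) : Prop :=
  IngrUpTo x t ∨ hmEq x t

theorem Ingr.ingrUpTo {k n : ℕ} {x : HMd A k} {t : HMd A n} (h : Ingr A x t) : IngrUpTo x t :=
  ⟨k, x, hmEq.refl x, h⟩

theorem IngrUpTo.ingrEUpTo {k n : ℕ} {x : HMd A k} {t : HMd A n} (h : IngrUpTo x t) :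
    IngrEUpTo x t :=
  .inl h

theorem IngrEUpTo.refl {n : ℕ} (t : HMd A n) : IngrEUpTo t t :=
  .inr (hmEq.refl t)

theorem ingrEUpTo_of_ingrE {k n : ℕ} {x : HMd A k} {t : HMd A n} (h : IngrE x t) :
    IngrEUpTo x t :=
  h.imp Ingr.ingrUpTo id

theorem ingrUpTo_congr_left {k k' n : ℕ} {x : HMd A k} {x' : HMd A k'} (h : hmEq x x')
    {t : HMd A n} : IngrUpTo x t ↔ IngrUpTo x' t :=
  ⟨fun ⟨j, y, he, hy⟩ => ⟨j, y, h.symm.trans he, hy⟩,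
    fun ⟨j, y, he, hy⟩ => ⟨j, y, h.trans he, hy⟩⟩

theorem not_ingrUpTo_zero {k : ℕ} {x : HMd A k} {m : HMd A 0} : ¬ IngrUpTo x m :=
  fun ⟨_, _, _, h⟩ => not_ingr_zero h

theorem ingrUpTo_iff_exists_memb {k n : ℕ} {x : HMd A k} {m : HMd A (n + 1)} :
    IngrUpTo x m ↔ ∃ w, Memb w m ∧ IngrEUpTo x w := by
  constructor
  · rintro ⟨j, y, he, hy⟩
    cases hy with
    | mem hy => exact ⟨y, hy, .inr he⟩
    | tail hy hw => exact ⟨_, hw, .inl ⟨j, y, he, hy⟩⟩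
  · rintro ⟨w, hw, ⟨j, y, he, hy⟩ | he⟩
    · exact ⟨j, y, he, .tail hy hw⟩
    · exact ⟨n, w, he, .mem hw⟩

theorem ingrUpTo_up {k n : ℕ} {x : HMd A k} {t : HMd A n} :
    IngrUpTo x (up n t) ↔ IngrUpTo x t := by
  induction n with
  | zero =>
    simp only [ingrUpTo_iff_exists_memb, not_ingrUpTo_zero, iff_false]
    rintro ⟨w, hw, -⟩
    exact not_memb_up_zero hw
  | succ n ih =>
    simp only [ingrUpTo_iff_exists_memb, memb_up_succ]
    constructor
    · rintro ⟨-, ⟨w, hw, rfl⟩, hx⟩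
      exact ⟨w, hw, or_congr ih ⟨(·.trans (hmEq_up w)), (·.trans (hmEq_up w).symm)⟩ |>.mp hx⟩
    · rintro ⟨w, hw, hx⟩
      exact ⟨_, ⟨w, hw, rfl⟩,
        or_congr ih ⟨(·.trans (hmEq_up w)), (·.trans (hmEq_up w).symm)⟩ |>.mpr hx⟩

theorem ingrUpTo_liftLe {k n c : ℕ} (h : n ≤ c) {x : HMd A k} {t : HMd A n} :
    IngrUpTo x (liftLe h t) ↔ IngrUpTo x t := by
  induction c, h using Nat.le_induction with
  | base => rw [liftLe_self]
  | succ c hnc ih => rw [liftLe_succ hnc, ingrUpTo_up, ih]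

theorem ingrUpTo_congr_right {k n c : ℕ} {x : HMd A k} {t : HMd A n} {t' : HMd A c}
    (h : hmEq t t') : IngrUpTo x t ↔ IngrUpTo x t' := by
  rcases le_total n c with hle | hle
  · rw [← h.liftLe_eq hle, ingrUpTo_liftLe]
  · rw [← h.symm.liftLe_eq hle, ingrUpTo_liftLe]

theorem ingrEUpTo_congr_right {k n c : ℕ} {x : HMd A k} {t : HMd A n} {t' : HMd A c}
    (h : hmEq t t') : IngrEUpTo x t ↔ IngrEUpTo x t' :=
  or_congr (ingrUpTo_congr_right h) ⟨(·.trans h), (·.trans h.symm)⟩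

theorem IngrUpTo.trans_ingrEUpTo {k j n : ℕ} {x : HMd A k} {y : HMd A j} {t : HMd A n}
    (h₁ : IngrUpTo x y) (h₂ : IngrEUpTo y t) : IngrUpTo x t := by
  rcases h₂ with ⟨i, w, he, hw⟩ | he
  · obtain ⟨i', v, hxv, hv⟩ := (ingrUpTo_congr_right he).mp h₁
    exact ⟨i', v, hxv, hv.trans hw⟩
  · exact (ingrUpTo_congr_right he).mp h₁

theorem MemUpTo.ingrUpTo {k n : ℕ} {x : HMd A k} {m : HMd A (n + 1)} (h : MemUpTo x m) :
    IngrUpTo x m :=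
  let ⟨y, hy, he⟩ := h
  ⟨n, y, he, .mem hy⟩

theorem MemUpTo.trans_ingrEUpTo {k j n : ℕ} {x : HMd A k} {y : HMd A (j + 1)} {t : HMd A n}
    (h : MemUpTo x y) (hy : IngrEUpTo y t) : IngrEUpTo x t :=
  (h.ingrUpTo.trans_ingrEUpTo hy).ingrEUpTo

theorem IngrUpTo.mem_flat {k n : ℕ} {x : HMd A k} {t : HMd A n} (h : IngrUpTo x t) {a : A}
    (ha : a ∈ x.flat) : a ∈ t.flat :=
  let ⟨_, _, he, hy⟩ := h
  hy.mem_flat (he.flat_eq ▸ ha)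

theorem IngrEUpTo.mem_flat {k n : ℕ} {x : HMd A k} {t : HMd A n} (h : IngrEUpTo x t) {a : A}
    (ha : a ∈ x.flat) : a ∈ t.flat := by
  rcases h with h | h
  · exact h.mem_flat ha
  · exact h.flat_eq ▸ ha

theorem ingrUpTo_add_rep {k n c : ℕ} {s : HMd A (n + 1)} {u : HMd A n} {x : HMd A k} :
    IngrUpTo x (s + rep c u) ↔ IngrUpTo x s ∨ (0 < c ∧ IngrEUpTo x u) := by
  rw [ingrUpTo_iff_exists_memb, ingrUpTo_iff_exists_memb]
  constructor
  · rintro ⟨w, hw, hx⟩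
    rcases memb_add.mp hw with hw | hw
    · exact .inl ⟨w, hw, hx⟩
    · obtain ⟨hc, rfl⟩ := memb_rep.mp hw
      exact .inr ⟨hc, hx⟩
  · rintro (⟨w, hw, hx⟩ | ⟨hc, hx⟩)
    · exact ⟨w, memb_add.mpr (.inl hw), hx⟩
    · exact ⟨u, memb_add.mpr (.inr (memb_rep.mpr ⟨hc, rfl⟩)), hx⟩

theorem ingrUpTo_ofList {k n : ℕ} {l : List (HMd A n × ℕ)} {x : HMd A k} :
    IngrUpTo x (ofList l) ↔ ∃ p ∈ l, 0 < p.2 ∧ IngrEUpTo x p.1 := by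
  rw [ingrUpTo_iff_exists_memb]
  constructor
  · rintro ⟨w, hw, hx⟩
    obtain ⟨p, hp, hc, rfl⟩ := memb_ofList.mp hw
    exact ⟨p, hp, hc, hx⟩
  · rintro ⟨p, hp, hc, hx⟩
    exact ⟨p.1, memb_ofList.mpr ⟨p, hp, hc, rfl⟩, hx⟩

theorem not_ingrUpTo_single {k n : ℕ} {x : HMd A k} {f : A} : ¬ IngrUpTo x (single n f) := by
  rw [ingrUpTo_congr_right (hmEq_single n f)]
  exact not_ingrUpTo_zero

theorem Ingr.size_lt {k n : ℕ} {x : HMd A k} {m : HMd A n} (h : Ingr A x m) :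
    x.size < m.size := by
  induction h with
  | mem h => exact size_lt_of_memb h
  | tail _ hm ih => exact ih.trans (size_lt_of_memb hm)

theorem not_ingrUpTo_self {n : ℕ} (t : HMd A n) : ¬ IngrUpTo t t := by
  rintro ⟨j, y, he, hy⟩
  have hsize : t.size = y.size := he.apply_eq size fun _ => size_up
  exact absurd hy.size_lt (by omega)

theorem FDisj.symm {k n : ℕ} {x : HMd A k} {y : HMd A n} (h : FDisj x y) : FDisj y x :=
  fun a hy hx => h a hx hy

theorem fdisj_up_left {k n : ℕ} {x : HMd A k} {y : HMd A n} (h : FDisj x y) :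
    FDisj (up k x) y := by
  simpa only [FDisj, flat_up] using h

theorem fdisj_ofList {k n : ℕ} {x : HMd A k} {l : List (HMd A n × ℕ)}
    (h : ∀ p ∈ l, FDisj x p.1) : FDisj x (ofList l) := by
  intro a ha hl
  obtain ⟨p, hp, -, hap⟩ := mem_flat_ofList.mp hl
  exact h p hp a ha hap

theorem eq_of_mem_flat_of_pairwise {n : ℕ} {l : List (HMd A n × ℕ)}
    (hl : l.Pairwise fun p q => FDisj p.1 q.1) {p q : HMd A n × ℕ} (hp : p ∈ l) (hq : q ∈ l)
    {a : A} (ha : a ∈ p.1.flat) (ha' : a ∈ q.1.flat) : p = q := by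
  have : Std.Symm fun p q : HMd A n × ℕ => FDisj p.1 q.1 := ⟨fun _ _ => FDisj.symm⟩
  by_contra hpq
  exact hl.forall hp hq hpq a ha ha'

theorem IngrEUpTo.of_add_rep {k n c : ℕ} {s : HMd A (n + 1)} {u : HMd A n} {x : HMd A k}
    (h : IngrEUpTo x (s + rep c u)) :
    hmEq x (s + rep c u) ∨ IngrEUpTo x s ∨ IngrEUpTo x u := by
  rcases h with h | h
  · rcases ingrUpTo_add_rep.mp h with h | ⟨-, h⟩
    · exact .inr (.inl h.ingrEUpTo)
    · exact .inr (.inr h)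
  · exact .inl h

theorem IngrEUpTo.of_ofList {k n : ℕ} {l : List (HMd A n × ℕ)} {x : HMd A k}
    (h : IngrEUpTo x (ofList l)) : hmEq x (ofList l) ∨ ∃ p ∈ l, IngrEUpTo x p.1 := by
  rcases h with h | h
  · obtain ⟨p, hp, -, h⟩ := ingrUpTo_ofList.mp h
    exact .inr ⟨p, hp, h⟩
  · exact .inl h

theorem IngrEUpTo.of_single {k n : ℕ} {x : HMd A k} {f : A} (h : IngrEUpTo x (single n f)) :
    hmEq x (single n f) :=
  h.resolve_left not_ingrUpTo_single

def IsSeparated {n : ℕ} (y : HMd A (n + 1)) : Prop :=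
  (∀ a, 0 < acount a y → ∀ {k} (w : HMd A k), MemUpTo w y → a ∉ w.flat) ∧
  ∀ {k k'} (w : HMd A k) (w' : HMd A k'), MemUpTo w y → MemUpTo w' y →
    ∀ a, a ∈ w.flat → a ∈ w'.flat → hmEq w w'

def HereditarilySeparated {n : ℕ} (t : HMd A n) : Prop :=
  ∀ {j} (y : HMd A (j + 1)), IngrEUpTo y t → IsSeparated y

def IsLaminar {n : ℕ} (t : HMd A n) : Prop :=
  ∀ {k k'} (y : HMd A k) (y' : HMd A k') (a : A), IngrEUpTo y t → IngrEUpTo y' t →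
    a ∈ y.flat → a ∈ y'.flat → IngrEUpTo y y' ∨ IngrEUpTo y' y

theorem IsSeparated.congr {j n : ℕ} {y : HMd A (j + 1)} {y' : HMd A (n + 1)} (h : hmEq y y')
    (hy : IsSeparated y) : IsSeparated y' := by
  refine ⟨fun a ha k w hw => ?_, fun w w' hw hw' => ?_⟩
  · exact hy.1 a (h.acount_eq a ▸ ha) w ((memUpTo_congr_right h).mpr hw)
  · exact hy.2 w w' ((memUpTo_congr_right h).mpr hw) ((memUpTo_congr_right h).mpr hw')

theorem isSeparated_add_rep {n c : ℕ} {s : HMd A (n + 1)} {u : HMd A n} (hs : IsSeparated s)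
    (hd : FDisj s u) : IsSeparated (s + rep c u) := by
  constructor
  · intro a ha k w hw
    rw [acount_add_rep] at ha
    rcases memUpTo_add_rep.mp hw with hw | ⟨-, hwu⟩
    · exact hs.1 a ha w hw
    · rw [hwu.flat_eq]
      exact hd a (mem_flat_of_acount_pos ha)
  · intro k k' w w' hw hw' a ha ha'
    rcases memUpTo_add_rep.mp hw with hw | ⟨-, hwu⟩ <;>
      rcases memUpTo_add_rep.mp hw' with hw' | ⟨-, hwu'⟩
    · exact hs.2 w w' hw hw' a ha ha'
    · exact absurd (hwu'.flat_eq ▸ ha') (hd a (hw.mem_flat ha))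
    · exact absurd (hwu.flat_eq ▸ ha) (hd a (hw'.mem_flat ha'))
    · exact hwu.trans hwu'.symm

theorem isSeparated_ofList {n : ℕ} {l : List (HMd A n × ℕ)}
    (hl : l.Pairwise fun p q => FDisj p.1 q.1) : IsSeparated (ofList l) := by
  constructor
  · intro a ha
    rw [acount_eq_zero_of_noAtoms (noAtoms_ofList l)] at ha
    exact absurd ha (lt_irrefl 0)
  · intro k k' w w' hw hw' a ha ha'
    obtain ⟨p, hp, -, hwp⟩ := memUpTo_ofList.mp hw
    obtain ⟨q, hq, -, hwq⟩ := memUpTo_ofList.mp hw'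
    obtain rfl := eq_of_mem_flat_of_pairwise hl hp hq (hwp.flat_eq ▸ ha) (hwq.flat_eq ▸ ha')
    exact hwp.trans hwq.symm

theorem HereditarilySeparated.congr {n c : ℕ} {t : HMd A n} {t' : HMd A c} (h : hmEq t t')
    (ht : HereditarilySeparated t) : HereditarilySeparated t' :=
  fun y hy => ht y ((ingrEUpTo_congr_right h).mpr hy)

theorem hereditarilySeparated_single (n : ℕ) (f : A) : HereditarilySeparated (single n f) := by
  intro j y hy
  have hno : ∀ {k} (w : HMd A k), ¬ MemUpTo w y :=
    fun _ => not_memUpTo_of_hmEq_zero (hy.of_single.trans (hmEq_single n f))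
  exact ⟨fun _ _ _ w hw => absurd hw (hno w), fun w _ hw => absurd hw (hno w)⟩

theorem hereditarilySeparated_add_rep {n c : ℕ} {s : HMd A (n + 1)} {u : HMd A n}
    (hs : HereditarilySeparated s) (hu : HereditarilySeparated u) (hd : FDisj s u) :
    HereditarilySeparated (s + rep c u) := by
  intro j y hy
  rcases hy.of_add_rep with hy | hy | hy
  · exact (isSeparated_add_rep (hs s (.refl s)) hd).congr hy.symm
  · exact hs y hy
  · exact hu y hy

theorem hereditarilySeparated_ofList {n : ℕ} {l : List (HMd A n × ℕ)}
    (h : ∀ p ∈ l, HereditarilySeparated p.1) (hl : l.Pairwise fun p q => FDisj p.1 q.1) :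
    HereditarilySeparated (ofList l) := by
  intro j y hy
  rcases hy.of_ofList with hy | ⟨p, hp, hy⟩
  · exact (isSeparated_ofList hl).congr hy.symm
  · exact h p hp y hy

theorem IsLaminar.congr {n c : ℕ} {t : HMd A n} {t' : HMd A c} (h : hmEq t t')
    (ht : IsLaminar t) : IsLaminar t' :=
  fun y y' a hy hy' =>
    ht y y' a ((ingrEUpTo_congr_right h).mpr hy) ((ingrEUpTo_congr_right h).mpr hy')

theorem isLaminar_single (n : ℕ) (f : A) : IsLaminar (single n f) :=
  fun _ _ _ hy hy' _ _ => .inl (.inr (hy.of_single.trans hy'.of_single.symm))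

theorem isLaminar_add_rep {n c : ℕ} {s : HMd A (n + 1)} {u : HMd A n} (hs : IsLaminar s)
    (hu : IsLaminar u) (hd : FDisj s u) : IsLaminar (s + rep c u) := by
  intro k k' y y' a hy hy' ha ha'
  rcases hy.of_add_rep with hT | hys | hyu
  · exact .inr ((ingrEUpTo_congr_right hT.symm).mp hy')
  rcases hy'.of_add_rep with hT' | hys' | hyu'
  · exact .inl ((ingrEUpTo_congr_right hT'.symm).mp hy)
  · exact hs y y' a hys hys' ha ha'
  · exact absurd (hyu'.mem_flat ha') (hd a (hys.mem_flat ha))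
  rcases hy'.of_add_rep with hT' | hys' | hyu'
  · exact .inl ((ingrEUpTo_congr_right hT'.symm).mp hy)
  · exact absurd (hyu.mem_flat ha) (hd a (hys'.mem_flat ha'))
  · exact hu y y' a hyu hyu' ha ha'

theorem isLaminar_ofList {n : ℕ} {l : List (HMd A n × ℕ)} (h : ∀ p ∈ l, IsLaminar p.1)
    (hl : l.Pairwise fun p q => FDisj p.1 q.1) : IsLaminar (ofList l) := by
  intro k k' y y' a hy hy' ha ha'
  rcases hy.of_ofList with hG | ⟨p, hp, hyp⟩
  · exact .inr ((ingrEUpTo_congr_right hG.symm).mp hy')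
  rcases hy'.of_ofList with hG' | ⟨q, hq, hyq⟩
  · exact .inl ((ingrEUpTo_congr_right hG'.symm).mp hy)
  obtain rfl := eq_of_mem_flat_of_pairwise hl hp hq (hyp.mem_flat ha) (hyq.mem_flat ha')
  exact h p hp y y' a hyp hyq ha ha'

theorem TreeLike.hereditarilySeparated {n : ℕ} {t : HMd F n} (ht : TreeLike F n t) :
    HereditarilySeparated t := by
  induction ht with
  | sing n f => exact hereditarilySeparated_single n f
  | up _ ih => exact ih.congr (hmEq_up _).symm
  | sol c _ _ hd ih₁ ih₂ => exact hereditarilySeparated_add_rep ih₁ ih₂ hd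
  | grp l _ _ hd hl ih ihl =>
    exact hereditarilySeparated_add_rep (ih.congr (hmEq_up _).symm)
      (hereditarilySeparated_ofList ihl hl) (fdisj_up_left (fdisj_ofList hd))

theorem TreeLike.isLaminar {n : ℕ} {t : HMd F n} (ht : TreeLike F n t) :
    IsLaminar t := by
  induction ht with
  | sing n f => exact isLaminar_single n f
  | up _ ih => exact ih.congr (hmEq_up _).symm
  | sol c _ _ hd ih₁ ih₂ => exact isLaminar_add_rep ih₁ ih₂ hd
  | grp l _ _ hd hl ih ihl =>
    exact isLaminar_add_rep (ih.congr (hmEq_up _).symm) (isLaminar_ofList ihl hl)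
      (fdisj_up_left (fdisj_ofList hd))

theorem HereditarilySeparated.hmEq_of_ingrEUpTo_of_acount_pos {n k j : ℕ} {t : HMd A n}
    {x : HMd A k} {y : HMd A j} {a : A} (ht : HereditarilySeparated t) (hy : IngrEUpTo y t)
    (hxy : IngrEUpTo x y) (hax : 0 < acount a x) (hay : 0 < acount a y) : hmEq x y := by
  refine hxy.resolve_left fun hxy => ?_
  cases j with
  | zero => exact not_ingrUpTo_zero hxy
  | succ j =>
    obtain ⟨w, hw, hxw⟩ := ingrUpTo_iff_exists_memb.mp hxy
    exact (ht y hy).1 a hay w (memUpTo_of_memb hw) (hxw.mem_flat (mem_flat_of_acount_pos hax))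

theorem hmEq_of_acount_pos {n k k' : ℕ} {t : HMd A n} {x : HMd A k} {y : HMd A k'} {a : A}
    (hl : IsLaminar t) (hs : HereditarilySeparated t) (hx : IngrEUpTo x t) (hy : IngrEUpTo y t)
    (hax : 0 < acount a x) (hay : 0 < acount a y) : hmEq x y := by
  rcases hl x y a hx hy (mem_flat_of_acount_pos hax) (mem_flat_of_acount_pos hay) with h | h
  · exact hs.hmEq_of_ingrEUpTo_of_acount_pos hy h hax hay
  · exact (hs.hmEq_of_ingrEUpTo_of_acount_pos hx h hay hax).symm

theorem HereditarilySeparated.hmEq_of_ingrEUpTo_of_memUpTo {n k j₁ j₂ : ℕ} {t : HMd A n}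
    {x : HMd A k} {y₁ : HMd A (j₁ + 1)} {y₂ : HMd A (j₂ + 1)} {a : A}
    (ht : HereditarilySeparated t) (hy₂ : IngrEUpTo y₂ t) (hy : IngrEUpTo y₁ y₂)
    (hx₁ : MemUpTo x y₁) (hx₂ : MemUpTo x y₂) (ha : a ∈ x.flat) : hmEq y₁ y₂ := by
  -- Otherwise `x` is a member of `y₂` inside another member `w`; separation forces `x ≈ w`.
  refine hy.resolve_left fun hy => ?_
  obtain ⟨w, hw, hyw⟩ := ingrUpTo_iff_exists_memb.mp hy
  have hxw : IngrUpTo x w := hx₁.ingrUpTo.trans_ingrEUpTo hyw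
  have hxw' : hmEq x w := (ht y₂ hy₂).2 x w hx₂ (memUpTo_of_memb hw) a ha (hxw.mem_flat ha)
  exact not_ingrUpTo_self w ((ingrUpTo_congr_left hxw').mp hxw)

theorem hmEq_of_memUpTo {n k j₁ j₂ : ℕ} {t : HMd A n} {x : HMd A k} {y₁ : HMd A (j₁ + 1)}
    {y₂ : HMd A (j₂ + 1)} {a : A} (hl : IsLaminar t) (hs : HereditarilySeparated t)
    (hy₁ : IngrEUpTo y₁ t) (hy₂ : IngrEUpTo y₂ t) (hx₁ : MemUpTo x y₁) (hx₂ : MemUpTo x y₂)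
    (ha : a ∈ x.flat) : hmEq y₁ y₂ := by
  rcases hl y₁ y₂ a hy₁ hy₂ (hx₁.mem_flat ha) (hx₂.mem_flat ha) with h | h
  · exact hs.hmEq_of_ingrEUpTo_of_memUpTo hy₂ h hx₁ hx₂ ha
  · exact (hs.hmEq_of_ingrEUpTo_of_memUpTo hy₁ h hx₂ hx₁ ha).symm

theorem TreeLike.exists_root {n : ℕ} {t : HMd F n} (ht : TreeLike F n t) :
    ∃ r, ∀ a, 0 < acount a t ↔ a = r := by
  induction ht with
  | sing n f => exact ⟨f, acount_single n f⟩
  | up _ ih =>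
    obtain ⟨r, hr⟩ := ih
    exact ⟨r, fun a => by rw [acount_up, hr]⟩
  | sol c _ _ _ ih =>
    obtain ⟨r, hr⟩ := ih
    exact ⟨r, fun a => by rw [acount_add_rep, hr]⟩
  | grp l _ _ _ _ ih =>
    obtain ⟨r, hr⟩ := ih
    exact ⟨r, fun a => by rw [acount_add_rep, acount_up, hr]⟩

theorem TreeLike.eq_of_acount_pos {n : ℕ} {t : HMd F n} {a b : F} (ht : TreeLike F n t)
    (ha : 0 < acount a t) (hb : 0 < acount b t) : a = b := by
  obtain ⟨r, hr⟩ := ht.exists_root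
  rw [(hr a).mp ha, (hr b).mp hb]

/-- The last clause of `IsParentIn`, relating the multisets induced by a feature and its parent. -/
def IsChild {k n : ℕ} (x : HMd F k) (m : HMd F (n + 1)) : Prop :=
  MemUpTo x m ∨ ∃ (kg : ℕ) (g : HMd F (kg + 1)), MemUpTo g m ∧ NoAtoms g ∧ MemUpTo x g

theorem IsChild.congr_left {k k' n : ℕ} {x : HMd F k} {x' : HMd F k'} {m : HMd F (n + 1)}
    (h : IsChild x m) (hx : hmEq x x') : IsChild x' m :=
  h.imp (memUpTo_congr_left hx).mp fun ⟨kg, g, hg, hga, hxg⟩ =>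
    ⟨kg, g, hg, hga, (memUpTo_congr_left hx).mp hxg⟩

theorem IsChild.mono {k n n' : ℕ} {x : HMd F k} {m : HMd F (n + 1)} {m' : HMd F (n' + 1)}
    (h : IsChild x m) (hm : ∀ {i} (z : HMd F i), MemUpTo z m → MemUpTo z m') : IsChild x m' :=
  h.imp (hm x) fun ⟨kg, g, hg, hga, hxg⟩ => ⟨kg, g, hm g hg, hga, hxg⟩

theorem IsChild.exists_memUpTo {k n : ℕ} {x : HMd F k} {m : HMd F (n + 1)} (h : IsChild x m) :
    ∃ (i : ℕ) (z : HMd F i), MemUpTo z m := by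
  rcases h with h | ⟨kg, g, hg, -⟩
  · exact ⟨k, x, h⟩
  · exact ⟨kg + 1, g, hg⟩

/-- The top-level elements `p`, `q` prevent `y` or `y'` from being the group through which the
other one reaches `x`. -/
theorem IsChild.hmEq {n k j j' : ℕ} {t : HMd F n} {x : HMd F k} {y : HMd F (j + 1)}
    {y' : HMd F (j' + 1)} {a p q : F} (hl : IsLaminar t) (hs : HereditarilySeparated t)
    (hy : IngrEUpTo y t) (hy' : IngrEUpTo y' t) (hp : 0 < acount p y) (hq : 0 < acount q y')
    (h : IsChild x y) (h' : IsChild x y') (ha : a ∈ x.flat) : hmEq y y' := by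
  have not_group : ∀ {j j'} {y : HMd F (j + 1)} {g : HMd F (j' + 1)} {p : F}, IngrEUpTo y t →
      IngrEUpTo g t → 0 < acount p y → NoAtoms g → MemUpTo x y → MemUpTo x g → False := by
    intro _ _ y g p hy hg hp hga hxy hxg
    rw [(hmEq_of_memUpTo hl hs hy hg hxy hxg ha).acount_eq, acount_eq_zero_of_noAtoms hga] at hp
    exact lt_irrefl 0 hp
  rcases h with h | ⟨_, g, hg, hga, hxg⟩ <;> rcases h' with h' | ⟨_, g', hg', hga', hxg'⟩
  · exact hmEq_of_memUpTo hl hs hy hy' h h' ha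
  · exact (not_group hy (hg'.trans_ingrEUpTo hy') hp hga' h hxg').elim
  · exact (not_group hy' (hg.trans_ingrEUpTo hy) hq hga h' hxg).elim
  · have hgg :=
      hmEq_of_memUpTo hl hs (hg.trans_ingrEUpTo hy) (hg'.trans_ingrEUpTo hy') hxg hxg' ha
    exact hmEq_of_memUpTo hl hs hy hy' hg ((memUpTo_congr_left hgg).mpr hg') (hxg.mem_flat ha)

theorem IsParentIn.mem_flat {n : ℕ} {t : HMd F n} {f p : F} (h : IsParentIn t f p) :
    p ∈ t.flat :=
  let ⟨_, _, ⟨hxp, _, hpx⟩, _⟩ := h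
  (ingrEUpTo_of_ingrE hxp).mem_flat (mem_flat_of_acount_pos hpx)

theorem TreeLike.isParentIn_unique {n : ℕ} {t : HMd F n} {f p q : F} (ht : TreeLike F n t)
    (hp : IsParentIn t f p) (hq : IsParentIn t f q) : p = q := by
  obtain ⟨_, xp, ⟨hxp, -, hpx⟩, _, xf, ⟨hxf, -, hfx⟩, hlink⟩ := hp
  obtain ⟨_, xq, ⟨hxq, hxqT, hqx⟩, _, xf', ⟨hxf', -, hfx'⟩, hlink'⟩ := hq
  have hl : IsLaminar t := ht.isLaminar
  have hs : HereditarilySeparated t := ht.hereditarilySeparated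
  have hf : hmEq xf' xf :=
    hmEq_of_acount_pos hl hs (ingrEUpTo_of_ingrE hxf') (ingrEUpTo_of_ingrE hxf) hfx' hfx
  have he : hmEq xp xq :=
    IsChild.hmEq hl hs (ingrEUpTo_of_ingrE hxp) (ingrEUpTo_of_ingrE hxq) hpx hqx hlink
      (IsChild.congr_left hlink' hf) (mem_flat_of_acount_pos hfx)
  exact hxqT.eq_of_acount_pos (he.acount_eq p ▸ hpx) hqx

/-- A multiset `x ≈ t` may have to be replaced by a larger one in `t'` (such as `t + rep c u` for
`t`), so for it only its root and its domain are required to persist. -/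
theorem IsParentIn.transfer {n n' : ℕ} {t : HMd F n} {t' : HMd F n'} {f p : F}
    (h : IsParentIn t f p) (hf : acount f t = 0)
    (hingr : ∀ {k} (x : HMd F k), Ingr F x t → TreeLike F k x →
      ∃ (j : ℕ) (x' : HMd F j), Ingr F x' t' ∧ TreeLike F j x' ∧ hmEq x x')
    (hself : ∀ {k i} (x : HMd F (k + 1)) (z : HMd F i), hmEq x t → TreeLike F (k + 1) x →
      MemUpTo z x → ∃ (j : ℕ) (x' : HMd F (j + 1)), IngrE x' t' ∧ TreeLike F (j + 1) x' ∧
        (∀ a, 0 < acount a x → 0 < acount a x') ∧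
        ∀ {i} (z : HMd F i), MemUpTo z x → MemUpTo z x') :
    IsParentIn t' f p := by
  obtain ⟨_, xp, ⟨hxp, hxpT, hpx⟩, _, xf, ⟨hxf, hxfT, hfx⟩, hlink⟩ := h
  have hxf : Ingr F xf t := hxf.resolve_right fun he => by
    rw [he.acount_eq, hf] at hfx
    exact lt_irrefl 0 hfx
  obtain ⟨jf, xf', hxf', hxfT', hef⟩ := hingr xf hxf hxfT
  have hchild : RootedIngr t' f xf' := ⟨.inl hxf', hxfT', hef.acount_eq f ▸ hfx⟩
  have hlink' : IsChild xf' xp := IsChild.congr_left hlink hef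
  obtain ⟨i, z, hz⟩ := IsChild.exists_memUpTo hlink
  rcases hxp with hxp | hxp
  · obtain ⟨j, xp', hxp', hxpT', hep⟩ := hingr xp hxp hxpT
    cases j with
    | zero => exact absurd hz (not_memUpTo_of_hmEq_zero hep)
    | succ j =>
      exact ⟨j, xp', ⟨.inl hxp', hxpT', hep.acount_eq p ▸ hpx⟩, jf, xf', hchild,
        hlink'.mono fun z => (memUpTo_congr_right hep).mp⟩
  · obtain ⟨j, xp', hxp', hxpT', hacount, hmem⟩ := hself xp z hxp hxpT hz
    exact ⟨j, xp', ⟨hxp', hxpT', hacount p hpx⟩, jf, xf', hchild, hlink'.mono hmem⟩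

theorem IsParentIn.up {n : ℕ} {t : HMd F n} {f p : F} (h : IsParentIn t f p)
    (hf : acount f t = 0) : IsParentIn (up n t) f p :=
  h.transfer hf (fun x hx hxT => ⟨_, HMd.up _ x, hx.up, hxT.up, (hmEq_up x).symm⟩)
    fun x _ hx hxT _ => ⟨_, x, .inr (hx.trans (hmEq_up t).symm), hxT, fun _ => id, fun _ => id⟩

theorem IsParentIn.add_rep {n c : ℕ} {s : HMd F (n + 1)} {u : HMd F n} {f p : F}
    (h : IsParentIn s f p) (hf : acount f s = 0) (hT : TreeLike F (n + 1) (s + rep c u)) :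
    IsParentIn (s + rep c u) f p :=
  h.transfer hf
    (fun x hx hxT => ⟨_, x, hx.mono fun _ hy => memb_add.mpr (.inl hy), hxT, .refl x⟩)
    fun x _ hx _ _ => ⟨n, s + rep c u, .inr (.refl _), hT,
      fun a ha => by rwa [acount_add_rep, ← hx.acount_eq],
      fun _ hz => memUpTo_add_rep.mpr (.inl ((memUpTo_congr_right hx).mp hz))⟩

theorem IsParentIn.of_ingr {n n' : ℕ} {s : HMd F n} {t : HMd F n'} {f p : F}
    (h : IsParentIn s f p) (hf : acount f s = 0) (hs : Ingr F s t) (hsT : TreeLike F n s) :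
    IsParentIn t f p := by
  have hingr : ∀ {k} (x : HMd F k), Ingr F x s → TreeLike F k x →
      ∃ (j : ℕ) (x' : HMd F j), Ingr F x' t ∧ TreeLike F j x' ∧ hmEq x x' :=
    fun x hx hxT => ⟨_, x, hx.trans hs, hxT, .refl x⟩
  cases n with
  | zero => exact h.transfer hf hingr fun x z hx _ hz => absurd hz (not_memUpTo_of_hmEq_zero hx)
  | succ n =>
    exact h.transfer hf hingr fun x _ hx _ _ => ⟨n, s, .inl hs, hsT,
      fun a ha => hx.acount_eq a ▸ ha, fun _ => (memUpTo_congr_right hx).mp⟩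

theorem isParentIn_of_memb {n : ℕ} {t : HMd F (n + 1)} {u : HMd F n} {f r : F}
    (ht : TreeLike F (n + 1) t) (hr : 0 < acount r t) (hu : Memb u t) (huT : TreeLike F n u)
    (hf : 0 < acount f u) : IsParentIn t f r :=
  ⟨n, t, ⟨.inr (.refl t), ht, hr⟩, n, u, ⟨.inl (.mem hu), huT, hf⟩, .inl (memUpTo_of_memb hu)⟩

theorem isParentIn_of_memb_noAtoms {n : ℕ} {t : HMd F (n + 2)} {g : HMd F (n + 1)}
    {u : HMd F n} {f r : F} (ht : TreeLike F (n + 2) t) (hr : 0 < acount r t) (hg : Memb g t)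
    (hga : NoAtoms g) (hu : Memb u g) (huT : TreeLike F n u) (hf : 0 < acount f u) :
    IsParentIn t f r :=
  ⟨n + 1, t, ⟨.inr (.refl t), ht, hr⟩, n, u, ⟨.inl (.tail (.mem hu) hg), huT, hf⟩,
    .inr ⟨n, g, memUpTo_of_memb hg, hga, memUpTo_of_memb hu⟩⟩

theorem exists_isParentIn_of_ingr {k n : ℕ} {s : HMd F k} {t : HMd F n} {f : F}
    (hs : Ingr F s t) (hsT : TreeLike F k s)
    (ih : ∀ f ∈ s.flat, acount f s = 0 → ∃ p, IsParentIn s f p) (hf : f ∈ s.flat)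
    (hroot : 0 < acount f s → ∃ p, IsParentIn t f p) : ∃ p, IsParentIn t f p := by
  by_cases hf₀ : 0 < acount f s
  · exact hroot hf₀
  · obtain ⟨p, hp⟩ := ih f hf (by omega)
    exact ⟨p, hp.of_ingr (by omega) hs hsT⟩

theorem TreeLike.exists_isParentIn {n : ℕ} {t : HMd F n} (ht : TreeLike F n t) :
    ∀ f ∈ t.flat, acount f t = 0 → ∃ p, IsParentIn t f p := by
  induction ht with
  | sing n f₀ =>
    intro f hf hf₀
    rw [flat_single, Multiset.mem_singleton] at hf
    exact absurd ((acount_single n f₀ f).mpr hf) (by omega)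
  | up _ ih =>
    intro f hf hf₀
    rw [flat_up] at hf
    rw [acount_up] at hf₀
    obtain ⟨p, hp⟩ := ih f hf hf₀
    exact ⟨p, hp.up hf₀⟩
  | @sol m t₁ t₂ c ht₁ ht₂ hd ih₁ ih₂ =>
    intro f hf hf₀
    have hT := TreeLike.sol c ht₁ ht₂ hd
    rw [acount_add_rep] at hf₀
    rcases mem_flat_add_rep.mp hf with hf | ⟨hc, hf⟩
    · obtain ⟨p, hp⟩ := ih₁ f hf hf₀
      exact ⟨p, hp.add_rep hf₀ hT⟩
    have hmem : Memb t₂ (t₁ + rep c t₂) := memb_add.mpr (.inr (memb_rep.mpr ⟨hc, rfl⟩))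
    refine exists_isParentIn_of_ingr (.mem hmem) ht₂ ih₂ hf fun hroot => ?_
    obtain ⟨r, hr⟩ := ht₁.exists_root
    exact ⟨r, isParentIn_of_memb hT (by rw [acount_add_rep, hr]) hmem ht₂ hroot⟩
  | @grp m t₀ l ht hl hd hpair ih ihl =>
    intro f hf hf₀
    have hT := TreeLike.grp l ht hl hd hpair
    rw [acount_add_rep, acount_up] at hf₀
    rcases mem_flat_add_rep.mp hf with hf | ⟨-, hf⟩
    · rw [flat_up] at hf
      obtain ⟨p, hp⟩ := ih f hf hf₀
      exact ⟨p, (hp.up hf₀).add_rep (by rwa [acount_up]) hT⟩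
    obtain ⟨q, hq, hqc, hfq⟩ := mem_flat_ofList.mp hf
    have hG : Memb (ofList l) (HMd.up (m + 1) t₀ + rep 1 (ofList l)) :=
      memb_add.mpr (.inr (memb_rep.mpr ⟨Nat.one_pos, rfl⟩))
    have hqG : Memb q.1 (ofList l) := memb_ofList.mpr ⟨q, hq, hqc, rfl⟩
    refine exists_isParentIn_of_ingr (.tail (.mem hqG) hG) (hl q hq) (ihl q hq) hfq fun hroot => ?_
    obtain ⟨r, hr⟩ := ht.exists_root
    exact ⟨r, isParentIn_of_memb_noAtoms hT (by rw [acount_add_rep, acount_up, hr]) hG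
      (noAtoms_ofList l) hqG (hl q hq) hroot⟩

/-- the parent function on a tree-like multiset is well-defined: every
non-root element of the flattened support has a unique parent. -/
theorem treelike_parent_well_defined (F : Type) (n : ℕ) (t : HMd F n)
    (ht : TreeLike F n t) (f : F) (hf : f ∈ HMd.flat t) (hnr : HMd.acount f t = 0) :
    ∃ p, p ∈ HMd.flat t ∧ IsParentIn t f p ∧
      ∀ q, q ∈ HMd.flat t → IsParentIn t f q → q = p := by
  obtain ⟨p, hp⟩ := ht.exists_isParentIn f hf hnr
  exact ⟨p, hp.mem_flat, hp, fun q _ hq => ht.isParentIn_unique hq hp⟩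

end
end CFDPaper
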